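/- arXiv:1512.00571 — 5 statements merged into one kernel-verified Lean document; each statement's English description precedes it below -/
import Mathlib

section
/- For a probability measure μ on a finite abelian group G with uniform measure U_G and n ≥ 1, the total variation distance satisfies ‖μ^{*n} − U_G‖_TV ≤ (1/2)·(Σ_{χ≠1} |μ̂(χ)|^{2n})^{1/2}, where the sum is over nontrivial characters χ of G and μ̂(χ) = Σ_x μ(x)χ(x). -/
open Finset

/-- Convolution of two densities on a finite abelian group. -/
noncomputable def convF {G : Type*} [AddCommGroup G] [Fintype G] (μ ν : G → ℝ) : G → ℝ :=
  fun z => ∑ y, μ y * ν (z - y)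

/-- Convolution powers; the 0th power is the Dirac mass at 0. -/
noncomputable def convPowF {G : Type*} [AddCommGroup G] [Fintype G] [DecidableEq G]
    (μ : G → ℝ) : ℕ → G → ℝ
  | 0 => fun z => if z = 0 then 1 else 0
  | n + 1 => convF (convPowF μ n) μ

/-- Total variation distance between two densities on a finite group. -/
noncomputable def tvDist {G : Type*} [Fintype G] (μ ν : G → ℝ) : ℝ :=
  ⨆ S : Finset G, |∑ x ∈ S, (μ x - ν x)|

section Aux
variable {G : Type*} [AddCommGroup G] [Fintype G] [DecidableEq G]

noncomputable def fhat (f : G → ℝ) (χ : AddChar G ℂ) : ℂ := ∑ x, (f x : ℂ) * χ x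

lemma fhat_convF (f g : G → ℝ) (χ : AddChar G ℂ) :
    fhat (convF f g) χ = fhat f χ * fhat g χ := by
  unfold fhat convF
  push_cast
  have key : ∀ y : G, ∑ z, (g (z - y) : ℂ) * χ z = χ y * ∑ w, (g w : ℂ) * χ w := by
    intro y
    rw [Finset.mul_sum, ← Equiv.sum_comp (Equiv.addRight y) (fun z => (g (z - y) : ℂ) * χ z)]
    refine Finset.sum_congr rfl fun w _ => ?_
    simp [AddChar.map_add_eq_mul]
    ring
  calc ∑ z, (∑ y, (f y : ℂ) * (g (z - y) : ℂ)) * χ z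
      = ∑ y, (f y : ℂ) * χ y * ∑ w, (g w : ℂ) * χ w := by
        simp_rw [Finset.sum_mul]
        rw [Finset.sum_comm]
        refine Finset.sum_congr rfl fun y _ => ?_
        simp_rw [mul_assoc, ← Finset.mul_sum]
        rw [key y]
    _ = (∑ x, (f x : ℂ) * χ x) * ∑ x, (g x : ℂ) * χ x := by rw [Finset.sum_mul]

lemma fhat_convPowF (μ : G → ℝ) (n : ℕ) (χ : AddChar G ℂ) :
    fhat (convPowF μ n) χ = (fhat μ χ) ^ n := by
  induction n with
  | zero =>
    simp only [convPowF, fhat, pow_zero]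
    rw [Finset.sum_eq_single 0]
    · simp
    · intro b _ hb; simp [hb]
    · simp
  | succ n ih => rw [convPowF, fhat_convF, ih, pow_succ]

lemma sum_convPowF (μ : G → ℝ) (hμ1 : ∑ x, μ x = 1) (n : ℕ) :
    ∑ x, convPowF μ n x = 1 := by
  induction n with
  | zero => simp [convPowF]
  | succ n ih =>
    simp only [convPowF, convF]
    rw [Finset.sum_comm]
    have h1 : ∀ y : G, ∑ z, μ (z - y) = 1 := by
      intro y
      rw [← Equiv.sum_comp (Equiv.addRight y) (fun z => μ (z - y))]
      simpa using hμ1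
    calc ∑ y, ∑ z, convPowF μ n y * μ (z - y)
        = ∑ y, convPowF μ n y * ∑ z, μ (z - y) := by simp [Finset.mul_sum]
      _ = 1 := by simp [h1, ih]

lemma parseval (f : G → ℝ) [Fintype (AddChar G ℂ)] :
    ∑ χ : AddChar G ℂ, ‖fhat f χ‖ ^ 2 = (Fintype.card G : ℝ) * ∑ x, f x ^ 2 := by
  have hinst := Subsingleton.elim ‹Fintype (AddChar G ℂ)› (AddChar.instFintype G ℂ)
  subst hinst
  have key : ∑ χ : AddChar G ℂ, fhat f χ * (starRingEnd ℂ) (fhat f χ)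
      = (Fintype.card G : ℂ) * ∑ x, (f x : ℂ) ^ 2 := by
    simp_rw [fhat, map_sum, map_mul, Complex.conj_ofReal, Finset.sum_mul_sum]
    rw [Finset.sum_comm]
    have h1 : ∀ (x y : G) (χ : AddChar G ℂ),
        (f x : ℂ) * χ x * ((f y : ℂ) * (starRingEnd ℂ) (χ y))
          = (f x : ℂ) * f y * χ (x - y) := by
      intro x y χ
      rw [sub_eq_add_neg, AddChar.map_add_eq_mul, AddChar.map_neg_eq_inv,
        AddChar.inv_apply_eq_conj]
      ring
    calc ∑ x, ∑ χ : AddChar G ℂ, ∑ y, (f x : ℂ) * χ x * ((f y : ℂ) * (starRingEnd ℂ) (χ y))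
        = ∑ x, ∑ y, (f x : ℂ) * f y * ∑ χ : AddChar G ℂ, χ (x - y) := by
          refine Finset.sum_congr rfl fun x _ => ?_
          rw [Finset.sum_comm]
          refine Finset.sum_congr rfl fun y _ => ?_
          rw [Finset.mul_sum]
          exact Finset.sum_congr rfl fun χ _ => h1 x y χ
      _ = (Fintype.card G : ℂ) * ∑ x, (f x : ℂ) ^ 2 := by
          simp_rw [AddChar.sum_apply_eq_ite, sub_eq_zero]
          rw [Finset.mul_sum]
          refine Finset.sum_congr rfl fun x _ => ?_
          simp only [mul_ite, mul_zero]
          rw [Finset.sum_ite_eq Finset.univ x]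
          simp only [Finset.mem_univ, if_true]
          ring
  have key2 : ((∑ χ : AddChar G ℂ, ‖fhat f χ‖ ^ 2 : ℝ) : ℂ)
      = (((Fintype.card G : ℝ) * ∑ x, f x ^ 2 : ℝ) : ℂ) := by
    push_cast
    simpa [Complex.mul_conj'] using key
  exact_mod_cast key2

end Aux

/-- the `L²` (Cauchy–Schwarz) upper bound
`‖μ^{*n} − U_G‖_TV ≤ (1/2)·(Σ_{χ≠1} |μ̂(χ)|^{2n})^{1/2}`. -/
theorem tv_le_l2_bound {G : Type*} [AddCommGroup G] [Fintype G] [DecidableEq G]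
    [Fintype (AddChar G ℂ)] [DecidableEq (AddChar G ℂ)]
    (μ : G → ℝ) (hμ0 : ∀ x, 0 ≤ μ x) (hμ1 : ∑ x, μ x = 1) (n : ℕ) (hn : 1 ≤ n) :
    tvDist (convPowF μ n) (fun _ => (Fintype.card G : ℝ)⁻¹) ≤
      (1 / 2) * Real.sqrt (∑ χ ∈ Finset.univ.filter (fun χ : AddChar G ℂ => χ ≠ 1),
        ‖∑ x, μ x * χ x‖ ^ (2 * n)) := by
  have hinst := Subsingleton.elim ‹Fintype (AddChar G ℂ)› (AddChar.instFintype G ℂ)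
  subst hinst
  set f : G → ℝ := convPowF μ n with hf
  set d : G → ℝ := fun x => f x - (Fintype.card G : ℝ)⁻¹ with hd
  have hG : (0 : ℝ) < Fintype.card G := by
    exact_mod_cast Fintype.card_pos
  have hsumf : ∑ x, f x = 1 := sum_convPowF μ hμ1 n
  have hsumd : ∑ x, d x = 0 := by
    simp only [hd, Finset.sum_sub_distrib, hsumf, Finset.sum_const, card_univ, nsmul_eq_mul]
    rw [mul_inv_cancel₀ (ne_of_gt hG)]
    ring
  -- Step 1 : TV ≤ (1/2) * L¹
  have step1 : tvDist f (fun _ => (Fintype.card G : ℝ)⁻¹) ≤ (1 / 2) * ∑ x, |d x| := by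
    refine ciSup_le fun S => ?_
    have hsplit : ∑ x ∈ S, d x + ∑ x ∈ Sᶜ, d x = 0 := by
      rw [Finset.sum_add_sum_compl]; exact hsumd
    have h2 : ∑ x ∈ S, d x = (1/2) * (∑ x ∈ S, d x - ∑ x ∈ Sᶜ, d x) := by linarith
    have : |∑ x ∈ S, d x| ≤ (1/2) * (∑ x ∈ S, |d x| + ∑ x ∈ Sᶜ, |d x|) := by
      rw [h2, abs_mul, abs_of_nonneg (by norm_num : (0:ℝ) ≤ 1/2)]
      have := abs_sub (∑ x ∈ S, d x) (∑ x ∈ Sᶜ, d x)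
      have h3 : |∑ x ∈ S, d x| ≤ ∑ x ∈ S, |d x| := Finset.abs_sum_le_sum_abs _ _
      have h4 : |∑ x ∈ Sᶜ, d x| ≤ ∑ x ∈ Sᶜ, |d x| := Finset.abs_sum_le_sum_abs _ _
      nlinarith [abs_sub_abs_le_abs_sub (∑ x ∈ S, d x) (∑ x ∈ Sᶜ, d x),
        abs_sub (∑ x ∈ S, d x) (∑ x ∈ Sᶜ, d x)]
    calc |∑ x ∈ S, (f x - (Fintype.card G : ℝ)⁻¹)| ≤ (1/2) * (∑ x ∈ S, |d x| + ∑ x ∈ Sᶜ, |d x|) := this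
      _ = (1/2) * ∑ x, |d x| := by rw [Finset.sum_add_sum_compl]
  -- Step 2 : L¹ ≤ sqrt (card G * L²)
  have step2 : ∑ x, |d x| ≤ Real.sqrt ((Fintype.card G : ℝ) * ∑ x, d x ^ 2) := by
    have h := sq_sum_le_card_mul_sum_sq (s := Finset.univ) (f := fun x => |d x|)
    simp only [card_univ, sq_abs] at h
    have hnn : 0 ≤ ∑ x, |d x| := Finset.sum_nonneg fun x _ => abs_nonneg _
    rw [← Real.sqrt_sq hnn]
    exact Real.sqrt_le_sqrt h
  -- Step 3 : Parseval identity
  have hfhatd : ∀ χ : AddChar G ℂ, fhat d χ =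
      (fhat μ χ) ^ n - (if χ = 1 then 1 else 0) := by
    intro χ
    have : fhat d χ = fhat f χ - (Fintype.card G : ℝ)⁻¹ * ∑ x, χ x := by
      simp only [fhat, hd]
      push_cast
      rw [Finset.mul_sum, ← Finset.sum_sub_distrib]
      refine Finset.sum_congr rfl fun x _ => ?_
      ring
    rw [this, fhat_convPowF]
    congr 1
    have h0 : ((0 : AddChar G ℂ) = 1) := rfl
    rw [AddChar.sum_eq_ite χ]
    split_ifs with h1 h2 h2
    · simp [hG.ne']
    · exact absurd (h0 ▸ h1) h2
    · exact absurd (h2 ▸ h0.symm) h1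
    · simp
  have step3 : (Fintype.card G : ℝ) * ∑ x, d x ^ 2 =
      ∑ χ ∈ Finset.univ.filter (fun χ : AddChar G ℂ => χ ≠ 1), ‖fhat μ χ‖ ^ (2 * n) := by
    rw [← parseval]
    rw [← Finset.sum_filter_add_sum_filter_not Finset.univ (fun χ : AddChar G ℂ => χ ≠ 1)]
    have hone : Finset.univ.filter (fun χ : AddChar G ℂ => ¬ χ ≠ 1) = {1} := by
      ext χ; simp
    rw [hone]
    have h1 : ‖fhat d (1 : AddChar G ℂ)‖ ^ 2 = 0 := by
      have hμhat : fhat μ (1 : AddChar G ℂ) = 1 := by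
        simp [fhat, ← Complex.ofReal_sum, hμ1]
      rw [hfhatd]
      simp [hμhat]
    rw [Finset.sum_singleton, h1, add_zero]
    refine Finset.sum_congr rfl fun χ hχ => ?_
    rw [Finset.mem_filter] at hχ
    rw [hfhatd, if_neg hχ.2, sub_zero, norm_pow, ← pow_mul, mul_comm n 2]
  calc tvDist f (fun _ => (Fintype.card G : ℝ)⁻¹)
      ≤ (1/2) * ∑ x, |d x| := step1
    _ ≤ (1/2) * Real.sqrt ((Fintype.card G : ℝ) * ∑ x, d x ^ 2) := by linarith
    _ = (1/2) * Real.sqrt (∑ χ ∈ Finset.univ.filter (fun χ : AddChar G ℂ => χ ≠ 1),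
          ‖∑ x, μ x * χ x‖ ^ (2 * n)) := by rw [step3]; rfl
end

section
/- Let Λ ⊂ ℝ^k be a lattice with norm-minimal fundamental domain (Voronoi cell) F = {x ∈ ℝ^k : ∀ λ ∈ Λ\{0}, ‖x‖₂ < ‖x − λ‖₂}, and let λ* be a shortest nonzero vector of the dual lattice Λ^∨ = {λ' : ∀ λ ∈ Λ, ⟨λ',λ⟩ ∈ ℤ}. Then ‖λ*‖₂ · diam(F) ≥ 1. -/
/-!
Let `v` be a nonzero dual vector. The point `x₀ = v / (2‖v‖²)` satisfies `⟪v, x₀⟫ = 1/2`, and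
subtracting from it a nearest lattice point `l₀` gives a point `y = x₀ - l₀` of the closed Voronoi
cell with `⟪v, y⟫ ∈ 1/2 + ℤ`, so that `‖v‖ ‖y‖ ≥ |⟪v, y⟫| ≥ 1/2`. The closed cell is symmetric and
lies in the closure of the open cell `F` (shrink towards the origin), and it is bounded because the
lattice has a bounded fundamental domain. Hence `diam F ≥ dist y (-y) = 2‖y‖ ≥ 1/‖v‖`.
-/

open Metric Filter Topology
open scoped RealInnerProductSpace

lemma one_half_le_abs_one_half_sub_intCast (m : ℤ) : 1 / 2 ≤ |1 / 2 - (m : ℝ)| := by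
  rcases le_or_gt m 0 with hm | hm
  · have : (m : ℝ) ≤ 0 := by exact_mod_cast hm
    rw [abs_of_nonneg (by linarith)]
    linarith
  · have : (1 : ℝ) ≤ m := by exact_mod_cast hm
    rw [abs_of_nonpos (by linarith)]
    linarith

section Voronoi

variable {E : Type*} [NormedAddCommGroup E]

def voronoiCell (L : Set E) : Set E := {x | ∀ l ∈ L, l ≠ 0 → ‖x‖ < ‖x - l‖}

def closedVoronoiCell (L : Set E) : Set E := {x | ∀ l ∈ L, ‖x‖ ≤ ‖x - l‖}

lemma voronoiCell_subset_closedVoronoiCell (L : Set E) :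
    voronoiCell L ⊆ closedVoronoiCell L := by
  intro x hx l hl
  rcases eq_or_ne l 0 with rfl | hl0
  · simp
  · exact (hx l hl hl0).le

lemma neg_mem_closedVoronoiCell {L : AddSubgroup E} {y : E}
    (hy : y ∈ closedVoronoiCell (L : Set E)) : -y ∈ closedVoronoiCell (L : Set E) := by
  intro l hl
  calc ‖-y‖ = ‖y‖ := norm_neg y
    _ ≤ ‖y - -l‖ := hy (-l) (neg_mem hl)
    _ = ‖-y - l‖ := by rw [← norm_neg]; congr 1; abel

lemma exists_sub_mem_closedVoronoiCell [ProperSpace E] {L : AddSubgroup E}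
    (hL : IsClosed (L : Set E)) (x : E) : ∃ l ∈ L, x - l ∈ closedVoronoiCell (L : Set E) := by
  obtain ⟨l₀, hl₀, hdist⟩ := hL.exists_infDist_eq_dist ⟨0, L.zero_mem⟩ x
  refine ⟨l₀, hl₀, fun l hl => ?_⟩
  rw [sub_sub, ← dist_eq_norm, ← dist_eq_norm, ← hdist]
  exact infDist_le_dist_of_mem (L.add_mem hl₀ hl)

end Voronoi

section ZLattice

variable {E : Type*} [NormedAddCommGroup E] [NormedSpace ℝ E] [FiniteDimensional ℝ E]

lemma ZLattice.exists_forall_exists_norm_sub_le (L : Submodule ℤ E) [DiscreteTopology L]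
    [IsZLattice ℝ L] : ∃ R, ∀ x : E, ∃ l ∈ L, ‖x - l‖ ≤ R := by
  have := ZLattice.module_finite ℝ L
  have := ZLattice.module_free ℝ L
  let b := (Module.Free.chooseBasis ℤ L).ofZLatticeBasis ℝ L
  refine ⟨∑ i, ‖b i‖, fun x => ⟨ZSpan.floor b x, ?_, ZSpan.norm_fract_le b x⟩⟩
  exact ((Module.Free.chooseBasis ℤ L).ofZLatticeBasis_span ℝ).le (ZSpan.floor b x).2

lemma ZLattice.isBounded_closedVoronoiCell (L : Submodule ℤ E) [DiscreteTopology L]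
    [IsZLattice ℝ L] : Bornology.IsBounded (closedVoronoiCell (L : Set E)) := by
  obtain ⟨R, hR⟩ := ZLattice.exists_forall_exists_norm_sub_le L
  refine isBounded_closedBall (x := 0) (r := R) |>.subset fun x hx => ?_
  obtain ⟨l, hl, hxl⟩ := hR x
  simpa using (hx l hl).trans hxl

end ZLattice

section InnerProductSpace

variable {E : Type*} [NormedAddCommGroup E] [InnerProductSpace ℝ E]

lemma norm_lt_norm_sub_iff (x l : E) : ‖x‖ < ‖x - l‖ ↔ 2 * ⟪x, l⟫ < ‖l‖ ^ 2 := by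
  rw [← sq_lt_sq₀ (norm_nonneg _) (norm_nonneg _), norm_sub_sq_real]
  constructor <;> intro h <;> linarith

lemma norm_le_norm_sub_iff (x l : E) : ‖x‖ ≤ ‖x - l‖ ↔ 2 * ⟪x, l⟫ ≤ ‖l‖ ^ 2 := by
  rw [← sq_le_sq₀ (norm_nonneg _) (norm_nonneg _), norm_sub_sq_real]
  constructor <;> intro h <;> linarith

lemma smul_mem_voronoiCell {L : Set E} {y : E} (hy : y ∈ closedVoronoiCell L) {t : ℝ}
    (ht₀ : 0 ≤ t) (ht₁ : t < 1) : t • y ∈ voronoiCell L := by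
  intro l hl hl0
  have hyl := (norm_le_norm_sub_iff y l).1 (hy l hl)
  have hl_pos : 0 < ‖l‖ ^ 2 := pow_pos (norm_pos_iff.2 hl0) 2
  rw [norm_lt_norm_sub_iff, real_inner_smul_left]
  linarith [mul_le_mul_of_nonneg_left hyl ht₀, mul_lt_mul_of_pos_right ht₁ hl_pos]

lemma closedVoronoiCell_subset_closure_voronoiCell (L : Set E) :
    closedVoronoiCell L ⊆ closure (voronoiCell L) := by
  intro y hy
  have hlim : Tendsto (fun t : ℝ => t • y) (𝓝[<] 1) (𝓝 y) := by
    simpa using ((tendsto_id (x := 𝓝 (1 : ℝ))).smul_const y).mono_left nhdsWithin_le_nhds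
  refine mem_closure_of_tendsto hlim ?_
  filter_upwards [Ioo_mem_nhdsLT zero_lt_one] with t ht using smul_mem_voronoiCell hy ht.1.le ht.2

lemma two_mul_norm_le_diam_voronoiCell {L : AddSubgroup E}
    (hbdd : Bornology.IsBounded (closedVoronoiCell (L : Set E))) {y : E}
    (hy : y ∈ closedVoronoiCell (L : Set E)) : 2 * ‖y‖ ≤ diam (voronoiCell (L : Set E)) := by
  have hF := hbdd.subset (voronoiCell_subset_closedVoronoiCell _)
  calc 2 * ‖y‖ = dist y (-y) := by
        rw [dist_eq_norm, sub_neg_eq_add, ← two_smul ℝ y, norm_smul, Real.norm_two]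
    _ ≤ diam (closure (voronoiCell (L : Set E))) :=
        dist_le_diam_of_mem hF.closure (closedVoronoiCell_subset_closure_voronoiCell _ hy)
          (closedVoronoiCell_subset_closure_voronoiCell _ (neg_mem_closedVoronoiCell hy))
    _ = diam (voronoiCell (L : Set E)) := diam_closure _

lemma exists_mem_closedVoronoiCell_one_le_two_mul_norm_mul_norm [ProperSpace E] {L : AddSubgroup E}
    (hL : IsClosed (L : Set E)) {v : E} (hv : v ≠ 0) (hdual : ∀ l ∈ L, ∃ m : ℤ, ⟪v, l⟫ = m) :
    ∃ y ∈ closedVoronoiCell (L : Set E), 1 ≤ 2 * (‖v‖ * ‖y‖) := by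
  set x₀ := (2 * ‖v‖ ^ 2)⁻¹ • v
  have hx₀ : ⟪v, x₀⟫ = 1 / 2 := by
    have : ‖v‖ ≠ 0 := norm_ne_zero_iff.2 hv
    rw [real_inner_smul_right, real_inner_self_eq_norm_sq]
    field_simp
  obtain ⟨l₀, hl₀, hy⟩ := exists_sub_mem_closedVoronoiCell hL x₀
  obtain ⟨m, hm⟩ := hdual l₀ hl₀
  refine ⟨x₀ - l₀, hy, ?_⟩
  calc 1 ≤ 2 * |⟪v, x₀ - l₀⟫| := by
        rw [inner_sub_right, hx₀, hm]
        linarith [one_half_le_abs_one_half_sub_intCast m]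
    _ ≤ 2 * (‖v‖ * ‖x₀ - l₀‖) := by
        gcongr
        exact abs_real_inner_le_norm _ _

end InnerProductSpace

theorem dual_shortest_vector_mul_diam_ge_one_general {k : ℕ}
    (Λ : Submodule ℤ (EuclideanSpace ℝ (Fin k)))
    (hdisc : DiscreteTopology Λ)
    (hspan : Submodule.span ℝ (Λ : Set (EuclideanSpace ℝ (Fin k))) = ⊤)
    (lstar : EuclideanSpace ℝ (Fin k))
    (hdualmem : ∀ l ∈ Λ, ∃ m : ℤ, (inner ℝ lstar l : ℝ) = (m : ℝ))
    (hne : lstar ≠ 0) :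
    1 ≤ ‖lstar‖ *
      Metric.diam {x : EuclideanSpace ℝ (Fin k) |
        ∀ l ∈ Λ, l ≠ 0 → ‖x‖ < ‖x - l‖} := by
  have : IsZLattice ℝ Λ := ⟨hspan⟩
  have : DiscreteTopology Λ.toAddSubgroup := hdisc
  obtain ⟨y, hy, hvy⟩ := exists_mem_closedVoronoiCell_one_le_two_mul_norm_mul_norm
    (L := Λ.toAddSubgroup) AddSubgroup.isClosed_of_discrete hne hdualmem
  calc 1 ≤ ‖lstar‖ * (2 * ‖y‖) := by linarith
    _ ≤ ‖lstar‖ * diam (voronoiCell (Λ.toAddSubgroup : Set (EuclideanSpace ℝ (Fin k)))) := by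
        gcongr
        exact two_mul_norm_le_diam_voronoiCell (ZLattice.isBounded_closedVoronoiCell Λ) hy

/-- for a full-rank lattice `Λ ⊂ ℝ^k` with Voronoi cell `F` and shortest
nonzero dual vector `λ*`, one has `‖λ*‖ · diam(F) ≥ 1`. -/
theorem dual_shortest_vector_mul_diam_ge_one {k : ℕ} (hk : 0 < k)
    (Λ : Submodule ℤ (EuclideanSpace ℝ (Fin k)))
    (hdisc : DiscreteTopology Λ)
    (hspan : Submodule.span ℝ (Λ : Set (EuclideanSpace ℝ (Fin k))) = ⊤)
    (lstar : EuclideanSpace ℝ (Fin k))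
    (hdualmem : ∀ l ∈ Λ, ∃ m : ℤ, (inner ℝ lstar l : ℝ) = (m : ℝ))
    (hne : lstar ≠ 0)
    (hmin : ∀ v : EuclideanSpace ℝ (Fin k), v ≠ 0 →
      (∀ l ∈ Λ, ∃ m : ℤ, (inner ℝ v l : ℝ) = (m : ℝ)) → ‖lstar‖ ≤ ‖v‖) :
    1 ≤ ‖lstar‖ *
      Metric.diam {x : EuclideanSpace ℝ (Fin k) |
        ∀ l ∈ Λ, l ≠ 0 → ‖x‖ < ‖x - l‖} :=
  dual_shortest_vector_mul_diam_ge_one_general Λ hdisc hspan lstar hdualmem hne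
end

section
/- Let p ≥ 3 be prime. For each ξ ∈ ℤ/pℤ with ξ ≢ 0, there exist a unique sign ε ∈ {±1} and a unique strictly increasing sequence of positive integers i₁ < i₂ < i₃ < ... such that ξ/p ≡ ε · Σ_{j=1}^∞ (−1)^j 2^{−i_j} (mod 1). -/
namespace UABE

/-- The alternating sum `Σ_j (-1)^j 2^{-i_j}` (so that the statement's sum is `-U i`). -/
noncomputable def U (i : ℕ → ℕ) : ℝ := ∑' j : ℕ, (-1:ℝ)^j * (2:ℝ)^(-(i j : ℤ))

/-- "non-dyadic" real number -/
def ND (y : ℝ) : Prop := ∀ (n : ℕ) (m : ℤ), (2:ℝ)^n * y ≠ m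

def G (y : ℝ) : Prop := ND y ∧ 0 < y ∧ y < 1/2

noncomputable def nxt (y : ℝ) : ℕ := (-Int.log 2 y - 1).toNat

noncomputable def Y (y : ℝ) : ℕ → ℝ
  | 0 => y
  | n+1 => (2:ℝ)^(-(nxt (Y y n) : ℤ)) - Y y n

noncomputable def Iseq (y : ℝ) : ℕ → ℕ := fun n => nxt (Y y n)

lemma add_le_apply {i : ℕ → ℕ} (hi : StrictMono i) (j : ℕ) : i 0 + j ≤ i j := by
  induction j with
  | zero => simp
  | succ n ih =>
    have h : i n < i (n+1) := hi (by omega)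
    omega

lemma zpow_neg_le {a b : ℤ} (h : a ≤ b) : (2:ℝ)^(-b) ≤ (2:ℝ)^(-a) :=
  zpow_le_zpow_right₀ one_le_two (by omega)

lemma half_pow (j : ℕ) : (1/2:ℝ)^j = (2:ℝ)^(-(j:ℤ)) := by
  rw [one_div, inv_pow, ← zpow_natCast, ← zpow_neg]

lemma term_bound {i : ℕ → ℕ} (hi : StrictMono i) (j : ℕ) :
    |(-1:ℝ)^j * (2:ℝ)^(-(i j : ℤ))| ≤ (2:ℝ)^(-(i 0 : ℤ)) * (1/2)^j := by
  rw [abs_mul, abs_pow, abs_neg, abs_one, one_pow, one_mul,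
    abs_of_pos (by positivity : (0:ℝ) < (2:ℝ)^(-(i j : ℤ))), half_pow,
    ← zpow_add₀ (by norm_num : (2:ℝ) ≠ 0)]
  have h := add_le_apply hi j
  rw [show -(i 0 : ℤ) + -(j:ℤ) = -((i 0 : ℤ) + j) by ring]
  apply zpow_neg_le
  exact_mod_cast h

lemma summable_aux (i : ℕ → ℕ) (hi : StrictMono i) :
    Summable (fun j : ℕ => (-1:ℝ)^j * (2:ℝ)^(-(i j : ℤ))) := by
  apply Summable.of_norm
  apply Summable.of_nonneg_of_le (fun j => norm_nonneg _) (fun j => ?_)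
    (summable_geometric_two.mul_left ((2:ℝ)^(-(i 0 : ℤ))))
  rw [Real.norm_eq_abs]
  exact term_bound hi j

lemma U_crude (i : ℕ → ℕ) (hi : StrictMono i) : |U i| ≤ 2 * (2:ℝ)^(-(i 0 : ℤ)) := by
  have h1 : ‖U i‖ ≤ ∑' j : ℕ, ‖(-1:ℝ)^j * (2:ℝ)^(-(i j : ℤ))‖ :=
    norm_tsum_le_tsum_norm ((summable_aux i hi).norm)
  have h2 : ∑' j : ℕ, ‖(-1:ℝ)^j * (2:ℝ)^(-(i j : ℤ))‖
      ≤ ∑' j : ℕ, (2:ℝ)^(-(i 0 : ℤ)) * (1/2)^j := by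
    apply Summable.tsum_le_tsum _ ((summable_aux i hi).norm)
      (summable_geometric_two.mul_left _)
    intro j
    rw [Real.norm_eq_abs]
    exact term_bound hi j
  rw [tsum_mul_left, tsum_geometric_two] at h2
  calc |U i| ≤ _ := h1
    _ ≤ (2:ℝ)^(-(i 0 : ℤ)) * 2 := h2
    _ = 2 * (2:ℝ)^(-(i 0 : ℤ)) := by ring

lemma U_shift (i : ℕ → ℕ) (hi : StrictMono i) :
    U i = (2:ℝ)^(-(i 0 : ℤ)) - U (fun k => i (k+1)) := by
  have hs := summable_aux i hi
  have h := Summable.tsum_eq_zero_add hs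
  have h2 : ∑' (b : ℕ), (-1:ℝ)^(b+1) * (2:ℝ)^(-(i (b+1) : ℤ))
      = -U (fun k => i (k+1)) := by
    rw [U, ← tsum_neg]
    congr 1; funext b; ring
  rw [U, h, h2]
  simp
  ring

lemma shift_mono {i : ℕ → ℕ} (hi : StrictMono i) : StrictMono (fun k => i (k+1)) :=
  hi.comp (fun a b h => by omega)

lemma zpow_neg_lt {a b : ℤ} (h : a < b) : (2:ℝ)^(-b) < (2:ℝ)^(-a) :=
  zpow_lt_zpow_right₀ one_lt_two (by omega)

lemma two_mul_le {a b : ℤ} (h : a < b) : 2 * (2:ℝ)^(-b) ≤ (2:ℝ)^(-a) := by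
  have : 2 * (2:ℝ)^(-b) = (2:ℝ)^(-(b-1)) := by
    rw [show -(b-1) = 1 + -b by ring, zpow_add₀ (by norm_num : (2:ℝ) ≠ 0)]
    norm_num
  rw [this]
  exact zpow_neg_le (by omega)

lemma U_nonneg (i : ℕ → ℕ) (hi : StrictMono i) : 0 ≤ U i := by
  have h1 := U_shift i hi
  have h2 := U_shift _ (shift_mono hi)
  have h3 := U_crude _ (shift_mono (shift_mono hi))
  have e01 : i 0 < i 1 := hi (by omega)
  have e12 : i 1 < i 2 := hi (by omega)
  have b1 : 2 * (2:ℝ)^(-(i 2 : ℤ)) ≤ (2:ℝ)^(-(i 1 : ℤ)) := two_mul_le (by exact_mod_cast e12)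
  have b2 : 2 * (2:ℝ)^(-(i 1 : ℤ)) ≤ (2:ℝ)^(-(i 0 : ℤ)) := two_mul_le (by exact_mod_cast e01)
  have := abs_le.mp h3
  nlinarith [this.1, this.2]

lemma U_pos (i : ℕ → ℕ) (hi : StrictMono i) : 0 < U i := by
  have h1 := U_shift i hi
  have h2 := U_shift _ (shift_mono hi)
  have h3 := U_nonneg _ (shift_mono (shift_mono hi))
  have e01 : (i 0 : ℤ) < i 1 := by exact_mod_cast hi (by omega : 0 < 1)
  have := zpow_neg_lt e01
  nlinarith

lemma U_lt (i : ℕ → ℕ) (hi : StrictMono i) : U i < (2:ℝ)^(-(i 0 : ℤ)) := by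
  have h1 := U_shift i hi
  have h2 := U_pos _ (shift_mono hi)
  linarith

lemma U_gt (i : ℕ → ℕ) (hi : StrictMono i) : (2:ℝ)^(-(i 0 : ℤ) - 1) < U i := by
  have h1 := U_shift i hi
  have h2 := U_lt _ (shift_mono hi)
  have e01 : (i 0 : ℤ) < i 1 := by exact_mod_cast hi (by omega : 0 < 1)
  have b : (2:ℝ)^(-(i 1 : ℤ)) ≤ (2:ℝ)^(-(i 0 : ℤ) - 1) :=
    zpow_le_zpow_right₀ one_le_two (by omega)
  simp only [zero_add] at h1 h2 ⊢
  have key : (2:ℝ)^(-(i 0 : ℤ)) = 2 * (2:ℝ)^(-(i 0 : ℤ) - 1) := by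
    rw [show (-(i 0:ℤ)) = 1 + (-(i 0:ℤ) - 1) by ring,
      zpow_add₀ (by norm_num : (2:ℝ) ≠ 0)]
    norm_num
  linarith

lemma head_eq {i i' : ℕ → ℕ} (hi : StrictMono i) (hi' : StrictMono i')
    (h : U i = U i') : i 0 = i' 0 := by
  by_contra hne
  rcases Nat.lt_or_ge (i 0) (i' 0) with hlt | hge
  · have h1 := U_gt i hi
    have h2 := U_lt i' hi'
    have hc : (i 0 : ℤ) < i' 0 := by exact_mod_cast hlt
    have : (2:ℝ)^(-(i' 0 : ℤ)) ≤ (2:ℝ)^(-(i 0 : ℤ) - 1) :=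
      zpow_le_zpow_right₀ one_le_two (by omega)
    linarith
  · have hlt : i' 0 < i 0 := by omega
    have h1 := U_gt i' hi'
    have h2 := U_lt i hi
    have hc : (i' 0 : ℤ) < i 0 := by exact_mod_cast hlt
    have : (2:ℝ)^(-(i 0 : ℤ)) ≤ (2:ℝ)^(-(i' 0 : ℤ) - 1) :=
      zpow_le_zpow_right₀ one_le_two (by omega)
    linarith

lemma U_inj_aux : ∀ n : ℕ, ∀ i i' : ℕ → ℕ, StrictMono i → StrictMono i' →
    U i = U i' → i n = i' n := by
  intro n
  induction n with
  | zero => intro i i' hi hi' h; exact head_eq hi hi' h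
  | succ n ih =>
    intro i i' hi hi' h
    have h0 := head_eq hi hi' h
    have hs : U (fun k => i (k+1)) = U (fun k => i' (k+1)) := by
      have e1 := U_shift i hi
      have e2 := U_shift i' hi'
      rw [h0] at e1
      linarith [e1, e2, h]
    exact ih _ _ (shift_mono hi) (shift_mono hi') hs

lemma U_inj {i i' : ℕ → ℕ} (hi : StrictMono i) (hi' : StrictMono i')
    (h : U i = U i') : i = i' :=
  funext fun n => U_inj_aux n i i' hi hi' h

lemma nxt_spec {y : ℝ} (hy : G y) :
    1 ≤ nxt y ∧ (2:ℝ)^(-(nxt y : ℤ) - 1) < y ∧ y < (2:ℝ)^(-(nxt y : ℤ)) := by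
  obtain ⟨hnd, hy0, hy2⟩ := hy
  set L := Int.log 2 y with hL
  have hlow : (2:ℝ)^L ≤ y := by exact_mod_cast Int.zpow_log_le_self (by norm_num) hy0
  have hhigh : y < (2:ℝ)^(L+1) := by exact_mod_cast Int.lt_zpow_succ_log_self (by norm_num) y
  have hL2 : L ≤ -2 := by
    by_contra hc
    push_neg at hc
    have : (2:ℝ)^(-1:ℤ) ≤ (2:ℝ)^L := zpow_le_zpow_right₀ one_le_two (by omega)
    have : (2:ℝ)^(-1:ℤ) ≤ y := le_trans this hlow
    norm_num at this
    linarith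
  have hcast : ((nxt y : ℤ)) = -L - 1 := by
    rw [nxt, Int.toNat_of_nonneg (by omega)]
  have h1 : 1 ≤ nxt y := by
    have : (1:ℤ) ≤ nxt y := by omega
    exact_mod_cast this
  refine ⟨h1, ?_, ?_⟩
  · rw [show -(nxt y : ℤ) - 1 = L by omega]
    rcases lt_or_eq_of_le hlow with h | h
    · exact h
    · exfalso
      have hne := hnd (-L).toNat 1
      apply hne
      have : ((-L).toNat : ℤ) = -L := Int.toNat_of_nonneg (by omega)
      rw [← zpow_natCast (2:ℝ), this, ← h, ← zpow_add₀ (by norm_num : (2:ℝ) ≠ 0)]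
      norm_num
  · rw [show -(nxt y : ℤ) = L + 1 by omega]
    exact hhigh

lemma ND_sub {y : ℝ} (hnd : ND y) (a : ℕ) : ND ((2:ℝ)^(-(a:ℤ)) - y) := by
  intro n m h
  apply hnd (n + a) ((2:ℤ)^n - 2^a * m)
  have key : (2:ℝ)^(n+a) * y = (2:ℝ)^n - (2:ℝ)^a * ((2:ℝ)^n * ((2:ℝ)^(-(a:ℤ)) - y)) := by
    have ha : (2:ℝ)^(a:ℕ) * (2:ℝ)^(-(a:ℤ)) = 1 := by
      rw [← zpow_natCast (2:ℝ) a, ← zpow_add₀ (by norm_num : (2:ℝ) ≠ 0)]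
      norm_num
    rw [pow_add]
    linear_combination (2:ℝ)^n * ha
  rw [key, h]
  push_cast
  ring

lemma G_step {y : ℝ} (hy : G y) :
    G ((2:ℝ)^(-(nxt y : ℤ)) - y) ∧ (2:ℝ)^(-(nxt y : ℤ)) - y < (2:ℝ)^(-(nxt y : ℤ) - 1) := by
  obtain ⟨h1, h2, h3⟩ := nxt_spec hy
  have key : (2:ℝ)^(-(nxt y : ℤ)) = 2 * (2:ℝ)^(-(nxt y : ℤ) - 1) := by
    rw [show (-(nxt y:ℤ)) = 1 + (-(nxt y:ℤ) - 1) by ring,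
      zpow_add₀ (by norm_num : (2:ℝ) ≠ 0)]
    norm_num
  have hlt : (2:ℝ)^(-(nxt y : ℤ)) - y < (2:ℝ)^(-(nxt y : ℤ) - 1) := by linarith
  refine ⟨⟨ND_sub hy.1 _, by linarith, ?_⟩, hlt⟩
  have : (2:ℝ)^(-(nxt y : ℤ) - 1) ≤ (2:ℝ)^(-2:ℤ) :=
    zpow_le_zpow_right₀ one_le_two (by omega)
  norm_num at this
  linarith

lemma G_Y {y : ℝ} (hy : G y) : ∀ n, G (Y y n) := by
  intro n
  induction n with
  | zero => exact hy
  | succ n ih => exact (G_step ih).1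

lemma Iseq_strictMono {y : ℝ} (hy : G y) : StrictMono (Iseq y) := by
  apply strictMono_nat_of_lt_succ
  intro n
  have hgn := G_Y hy n
  have hstep := G_step hgn
  have hgn1 : G (Y y (n+1)) := by exact hstep.1
  have hb : Y y (n+1) < (2:ℝ)^(-(Iseq y n : ℤ) - 1) := hstep.2
  have hs := nxt_spec hgn1
  have hlow : (2:ℝ)^(-(Iseq y (n+1) : ℤ) - 1) < Y y (n+1) := hs.2.1
  have : (2:ℝ)^(-(Iseq y (n+1) : ℤ) - 1) < (2:ℝ)^(-(Iseq y n : ℤ) - 1) := lt_trans hlow hb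
  have := (zpow_lt_zpow_iff_right₀ (by norm_num : (1:ℝ) < 2)).mp this
  omega

lemma Y_partial {y : ℝ} : ∀ n : ℕ,
    y = (∑ k ∈ Finset.range n, (-1:ℝ)^k * (2:ℝ)^(-(Iseq y k : ℤ))) + (-1:ℝ)^n * Y y n := by
  intro n
  induction n with
  | zero => simp [Y]
  | succ n ih =>
    have hY : Y y (n+1) = (2:ℝ)^(-(Iseq y n : ℤ)) - Y y n := rfl
    rw [Finset.sum_range_succ, hY]
    conv_lhs => rw [ih]
    ring

lemma hasSum_Y {y : ℝ} (hy : G y) : U (Iseq y) = y := by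
  have hmono := Iseq_strictMono hy
  have hs := summable_aux _ hmono
  have htend := hs.hasSum.tendsto_sum_nat
  have hbound : ∀ n : ℕ,
      |(∑ k ∈ Finset.range n, (-1:ℝ)^k * (2:ℝ)^(-(Iseq y k : ℤ))) - y| ≤ (1/2)^n := by
    intro n
    have hp := Y_partial (y := y) n
    have : (∑ k ∈ Finset.range n, (-1:ℝ)^k * (2:ℝ)^(-(Iseq y k : ℤ))) - y
        = -((-1:ℝ)^n * Y y n) := by linarith
    rw [this, abs_neg, abs_mul, abs_pow, abs_neg, abs_one, one_pow, one_mul]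
    have hgn := G_Y hy n
    rw [abs_of_pos hgn.2.1]
    have h1 : Y y n < (2:ℝ)^(-(Iseq y n : ℤ)) := (nxt_spec hgn).2.2
    have h2 : (n : ℤ) ≤ Iseq y n := by exact_mod_cast hmono.le_apply
    have h3 : (2:ℝ)^(-(Iseq y n : ℤ)) ≤ (2:ℝ)^(-(n:ℤ)) :=
      zpow_le_zpow_right₀ one_le_two (by omega)
    rw [half_pow]
    linarith
  have htend2 : Filter.Tendsto
      (fun n => ∑ k ∈ Finset.range n, (-1:ℝ)^k * (2:ℝ)^(-(Iseq y k : ℤ)))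
      Filter.atTop (nhds y) := by
    rw [tendsto_iff_norm_sub_tendsto_zero]
    apply squeeze_zero (fun n => norm_nonneg _) (fun n => hbound n)
    exact tendsto_pow_atTop_nhds_zero_of_lt_one (by norm_num) (by norm_num)
  exact tendsto_nhds_unique htend htend2

lemma T_eq (i : ℕ → ℕ) :
    ∑' j : ℕ, (-1:ℝ)^(j+1) * (2:ℝ)^(-(i j : ℤ)) = -U i := by
  rw [U, ← tsum_neg]
  congr 1
  funext j
  ring

lemma exu (x : ℝ) (hx0 : 0 < x) (hx1 : x < 1) (hND : ND x) (hne : x ≠ 1/2) :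
    ∃! εi : ℤ × (ℕ → ℕ),
      (εi.1 = 1 ∨ εi.1 = -1) ∧ StrictMono εi.2 ∧ 1 ≤ εi.2 0 ∧
      ∃ m : ℤ,
        x - (εi.1 : ℝ) * ∑' j : ℕ, (-1 : ℝ) ^ (j + 1) * (2 : ℝ) ^ (-(εi.2 j : ℤ)) = (m : ℝ) := by
  have cand : ∀ (ε' : ℤ) (i' : ℕ → ℕ), (ε' = 1 ∨ ε' = -1) → StrictMono i' → 1 ≤ i' 0 →
      ∀ m' : ℤ, x - (ε' : ℝ) * ∑' j : ℕ, (-1 : ℝ)^(j+1) * (2:ℝ)^(-(i' j : ℤ)) = (m' : ℝ) →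
      0 < U i' ∧ U i' < 1/2 ∧ x + (ε' : ℝ) * U i' = m' ∧ (m' = 0 ∨ m' = 1) := by
    intro ε' i' hε' hmono' hpos' m' hm'
    rw [T_eq] at hm'
    have hU0 : 0 < U i' := U_pos _ hmono'
    have hUlt : U i' < 1/2 := by
      have h1 := U_lt _ hmono'
      have hb : (2:ℝ)^(-(i' 0 : ℤ)) ≤ (2:ℝ)^(-1:ℤ) :=
        zpow_le_zpow_right₀ one_le_two (by
          have : (1:ℤ) ≤ (i' 0 : ℤ) := by exact_mod_cast hpos'
          omega)
      have hhalf : (2:ℝ)^(-1:ℤ) = 1/2 := by norm_num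
      have h2 := lt_of_lt_of_le h1 hb
      rw [hhalf] at h2
      exact h2
    have heq : x + (ε' : ℝ) * U i' = m' := by linarith [hm']
    refine ⟨hU0, hUlt, heq, ?_⟩
    have hbnd : -(1/2:ℝ) < (ε' : ℝ) * U i' ∧ (ε' : ℝ) * U i' < 1/2 := by
      rcases hε' with h | h <;> rw [h] <;> push_cast <;> constructor <;> nlinarith
    have h1 : (-1:ℝ) < (m' : ℝ) := by linarith [hbnd.1]
    have h2 : (m' : ℝ) < 2 := by linarith [hbnd.2]
    have h1' : (-1:ℤ) < m' := by exact_mod_cast h1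
    have h2' : m' < 2 := by exact_mod_cast h2
    omega
  by_cases hlt : x < 1/2
  · -- ε = -1, y = x, m = 0
    have hG : G x := ⟨hND, hx0, hlt⟩
    refine ⟨⟨-1, Iseq x⟩, ⟨Or.inr rfl, Iseq_strictMono hG, (nxt_spec hG).1, 0, ?_⟩, ?_⟩
    · rw [T_eq, hasSum_Y hG]
      push_cast
      ring
    · rintro ⟨ε', i'⟩ ⟨hε', hmono', hpos', m', hm'⟩
      obtain ⟨hU0, hUlt, heq, hm01⟩ := cand ε' i' hε' hmono' hpos' m' hm'
      have hε1 : ε' = 1 ∨ ε' = -1 := hε'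
      rcases hm01 with h0 | h1
      · subst h0
        have hkey : (ε' : ℝ) * U i' = -x := by push_cast at heq; linarith
        rcases hε1 with h | h
        · exfalso; rw [h] at hkey; push_cast at hkey; nlinarith
        · rw [h] at hkey; push_cast at hkey
          have hUx : U i' = U (Iseq x) := by rw [hasSum_Y hG]; linarith
          have hi := U_inj hmono' (Iseq_strictMono hG) hUx
          simp only [Prod.mk.injEq]
          exact ⟨h, hi⟩
      · exfalso
        subst h1
        have hkey : (ε' : ℝ) * U i' = 1 - x := by push_cast at heq; linarith
        rcases hε1 with h | h <;> rw [h] at hkey <;> push_cast at hkey <;> nlinarith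
  · -- ε = 1, y = 1 - x, m = 1
    have hgt : 1/2 < x := lt_of_le_of_ne (not_lt.mp hlt) (Ne.symm hne)
    have hGnd : ND (1 - x) := by
      have := ND_sub hND 0
      simpa using this
    have hG : G (1 - x) := ⟨hGnd, by linarith, by linarith⟩
    refine ⟨⟨1, Iseq (1 - x)⟩, ⟨Or.inl rfl, Iseq_strictMono hG, (nxt_spec hG).1, 1, ?_⟩, ?_⟩
    · rw [T_eq, hasSum_Y hG]
      push_cast
      ring
    · rintro ⟨ε', i'⟩ ⟨hε', hmono', hpos', m', hm'⟩
      obtain ⟨hU0, hUlt, heq, hm01⟩ := cand ε' i' hε' hmono' hpos' m' hm'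
      have hε1 : ε' = 1 ∨ ε' = -1 := hε'
      rcases hm01 with h0 | h1
      · exfalso
        subst h0
        have hkey : (ε' : ℝ) * U i' = -x := by push_cast at heq; linarith
        rcases hε1 with h | h <;> rw [h] at hkey <;> push_cast at hkey <;> nlinarith
      · subst h1
        have hkey : (ε' : ℝ) * U i' = 1 - x := by push_cast at heq; linarith
        rcases hε1 with h | h
        · rw [h] at hkey; push_cast at hkey
          have hUx : U i' = U (Iseq (1 - x)) := by rw [hasSum_Y hG]; linarith
          have hi := U_inj hmono' (Iseq_strictMono hG) hUx
          simp only [Prod.mk.injEq]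
          exact ⟨h, hi⟩
        · exfalso; rw [h] at hkey; push_cast at hkey; nlinarith

end UABE

/-- for a prime `p ≥ 3` and `ξ ≢ 0 mod p`, there is a unique pair of a
sign `ε ∈ {±1}` and a strictly increasing sequence of positive integers `i₁ < i₂ < ⋯`
with `ξ/p ≡ ε·Σ_{j=1}^∞ (−1)^j 2^{−i_j} (mod 1)`. -/
theorem unique_alternating_binary_expansion (p : ℕ) (hp : p.Prime) (h3 : 3 ≤ p)
    (ξ : ZMod p) (hξ : ξ ≠ 0) :
    ∃! εi : ℤ × (ℕ → ℕ),
      (εi.1 = 1 ∨ εi.1 = -1) ∧ StrictMono εi.2 ∧ 1 ≤ εi.2 0 ∧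
      ∃ m : ℤ,
        (ξ.val : ℝ) / p -
          (εi.1 : ℝ) * ∑' j : ℕ, (-1 : ℝ) ^ (j + 1) * (2 : ℝ) ^ (-(εi.2 j : ℤ)) = (m : ℝ) := by
  haveI : NeZero p := ⟨by omega⟩
  set x : ℝ := (ξ.val : ℝ) / p with hxdef
  have hpR : (0:ℝ) < p := by positivity
  have hv1 : 1 ≤ ξ.val := by
    have := (ZMod.val_eq_zero ξ).not.mpr (by simpa using hξ)
    omega
  have hvp : ξ.val < p := ZMod.val_lt ξ
  have hx0 : 0 < x := by
    apply div_pos _ hpR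
    exact_mod_cast hv1
  have hx1 : x < 1 := by
    rw [hxdef, div_lt_one hpR]
    exact_mod_cast hvp
  have hND : UABE.ND x := by
    intro n m h
    have hq : (2:ℝ)^n * (ξ.val : ℝ) = m * p := by
      have h2 : (2:ℝ)^n * (ξ.val : ℝ) = (2:ℝ)^n * ((ξ.val : ℝ)/p) * p := by
        field_simp
      rw [h2, hxdef] at *
      rw [h]
    have hz : ((2:ℤ)^n * (ξ.val : ℤ) : ℤ) = m * p := by exact_mod_cast hq
    have hdvd : (p:ℤ) ∣ (2:ℤ)^n * (ξ.val : ℤ) := ⟨m, by linarith [hz]⟩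
    have hpp : Prime (p:ℤ) := Int.prime_iff_natAbs_prime.mpr (by simpa using hp)
    rcases hpp.dvd_mul.mp hdvd with h2 | hv
    · have hd2 := hpp.dvd_of_dvd_pow h2
      have : (p:ℤ) ≤ 2 := Int.le_of_dvd (by norm_num) hd2
      omega
    · have hle : (p:ℤ) ≤ (ξ.val : ℤ) := Int.le_of_dvd (by exact_mod_cast hv1) hv
      have : (ξ.val : ℤ) < p := by exact_mod_cast hvp
      omega
  have hhalfne : x ≠ 1/2 := by
    intro h
    apply hND 1 1
    rw [h]
    norm_num
  exact UABE.exu x hx0 hx1 hND hhalfne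
end

section
/- Fix a parameter J > 0 and integers m ≥ 1, x₃ ≥ 0. The number of x₃-tuples of normalized J-sequences with total cardinality m is at most (J+1)^{m−1}. Here a J-sequence is a finite increasing sequence of nonnegative integers in which consecutive elements differ by at most J, and it is normalized if its first element is 0. -/
/-- A finite nonempty set of nonnegative integers, viewed as an increasing sequence, is a
normalized `J`-sequence if its first element is `0` and consecutive elements (in
increasing order) differ by at most `J`. -/
def IsNormalizedJSeq (J : ℝ) (A : Finset ℕ) : Prop :=
  A.Nonempty ∧ 0 ∈ A ∧
    ∀ a ∈ A, ∀ b ∈ A, a < b → (∀ c ∈ A, ¬(a < c ∧ c < b)) → (b : ℝ) - (a : ℝ) ≤ J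

/-!
A normalized `J`-sequence `0 = a₀ < a₁ < ⋯ < a_{c-1}` is determined by its gaps
`a₁ - a₀, …, a_{c-1} - a_{c-2}`, which are `c - 1` integers in `[1, ⌊J⌋]`. Writing the gap lists
of the `x₃` sequences one after the other, separated by `0`, encodes the tuple injectively as a
word of length `m - 1` over the alphabet `{0, …, ⌊J⌋}`, and there are `(⌊J⌋ + 1)^(m-1)` such words.
-/

open Finset

namespace List

def gaps : List ℕ → List ℕ
  | a :: b :: t => (b - a) :: gaps (b :: t)
  | _ => []

theorem length_gaps : ∀ l : List ℕ, l.gaps.length = l.length - 1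
  | [] | [_] => rfl
  | _ :: b :: t => by simp [gaps, length_gaps (b :: t)]

theorem forall_mem_gaps_iff {p : ℕ → Prop} :
    ∀ {l : List ℕ}, (∀ x ∈ l.gaps, p x) ↔ l.IsChain fun a b => p (b - a)
  | [] | [_] => by simp [gaps]
  | _ :: b :: t => by simp [gaps, forall_mem_gaps_iff (l := b :: t)]

theorem scanl_add_gaps : ∀ {a : ℕ} {t : List ℕ}, (a :: t).IsChain (· ≤ ·) →
    (a :: t).gaps.scanl (· + ·) a = a :: t
  | _, [], _ => rfl
  | _, _ :: _, h => by
    rw [isChain_cons_cons] at h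
    simp [gaps, Nat.add_sub_cancel' h.1, scanl_add_gaps h.2]

theorem length_intercalate_singleton {α : Type*} (x : α) : ∀ L : List (List α),
    ([x].intercalate L).length = (L.map length).sum + (L.length - 1)
  | [] | [_] => by simp
  | _ :: l' :: L => by
    simp [intercalate_cons_cons, length_intercalate_singleton x (l' :: L)]
    omega

theorem forall_mem_intercalate_singleton {α : Type*} {p : α → Prop} {x : α} (hx : p x) :
    ∀ {L : List (List α)}, (∀ l ∈ L, ∀ y ∈ l, p y) → ∀ y ∈ [x].intercalate L, p y
  | [], _ => by simp
  | [l], hL => by simpa using hL l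
  | l :: l' :: L, hL => by
    simp only [intercalate_cons_cons, mem_append, mem_singleton]
    rintro y ((hy | rfl) | hy)
    · exact hL l mem_cons_self y hy
    · exact hx
    · exact forall_mem_intercalate_singleton hx (fun l hl => hL l (mem_cons_of_mem _ hl)) y hy

theorem SortedLT.getElem_succ_le_of_lt {α : Type*} [Preorder α] {l : List α} (hl : l.SortedLT)
    {i : ℕ} (hi : i + 1 < l.length) {c : α} (hc : c ∈ l) (h : l[i] < c) : l[i + 1] ≤ c := by
  obtain ⟨j, hj, rfl⟩ := getElem_of_mem hc
  have hij : i < j := hl.strictMono_get.lt_iff_lt (a := ⟨i, by omega⟩) (b := ⟨j, hj⟩) |>.1 h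
  exact hl.strictMono_get.monotone (a := ⟨i + 1, hi⟩) (b := ⟨j, hj⟩) (Fin.mk_le_mk.2 hij)

end List

theorem Nat.card_le_pow_of_injective_list {α : Type*} {f : α → List ℕ}
    (hf : Function.Injective f) {n L : ℕ} (hlen : ∀ a, (f a).length = L)
    (hle : ∀ a, ∀ x ∈ f a, x ≤ n) : Nat.card α ≤ (n + 1) ^ L := by
  let g : α → List.Vector (Fin (n + 1)) L :=
    fun a => ⟨(f a).map (Fin.ofNat (n + 1)), by simp [hlen]⟩
  have hval : ∀ a, (g a).toList.map Fin.val = f a := fun a => by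
    simp only [g, List.Vector.toList_mk, List.map_map]
    refine (List.map_congr_left fun x hx => ?_).trans (List.map_id _)
    simpa using Nat.mod_eq_of_lt (Nat.lt_succ_of_le (hle a x hx))
  have hg : Function.Injective g := fun a b hab => hf <| by
    rw [← hval a, ← hval b, hab]
  simpa [Nat.card_eq_fintype_card] using Nat.card_le_card_of_injective g hg

namespace Finset

theorem sort_eq_zero_cons_sort_erase {A : Finset ℕ} (h0 : 0 ∈ A) :
    A.sort = 0 :: (A.erase 0).sort := by
  conv_lhs => rw [← insert_erase h0]
  exact sort_insert (· ≤ ·) (fun b _ => b.zero_le) (notMem_erase 0 A)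

theorem scanl_add_gaps_sort {A : Finset ℕ} (h0 : 0 ∈ A) :
    A.sort.gaps.scanl (· + ·) 0 = A.sort := by
  rw [sort_eq_zero_cons_sort_erase h0]
  exact List.scanl_add_gaps (sort_eq_zero_cons_sort_erase h0 ▸ (pairwise_sort A (· ≤ ·)).isChain)

theorem eq_of_gaps_sort_eq {A B : Finset ℕ} (hA : 0 ∈ A) (hB : 0 ∈ B)
    (h : A.sort.gaps = B.sort.gaps) : A = B := by
  calc A = (A.sort.gaps.scanl (· + ·) 0).toFinset := by rw [scanl_add_gaps_sort hA, sort_toFinset]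
    _ = (B.sort.gaps.scanl (· + ·) 0).toFinset := by rw [h]
    _ = B := by rw [scanl_add_gaps_sort hB, sort_toFinset]

end Finset

theorem IsNormalizedJSeq.forall_mem_gaps_sort {J : ℝ} {A : Finset ℕ} (hA : IsNormalizedJSeq J A) :
    ∀ x ∈ A.sort.gaps, 0 < x ∧ x ≤ ⌊J⌋₊ := by
  have hl := sortedLT_sort A
  refine List.forall_mem_gaps_iff.2 (List.isChain_iff_getElem.2 fun i hi => ?_)
  have hlt : A.sort[i] < A.sort[i + 1] := hl.strictMono_get (Fin.mk_lt_mk.2 i.lt_succ_self)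
  have hadj : ∀ c ∈ A, ¬(A.sort[i] < c ∧ c < A.sort[i + 1]) := fun c hc ⟨hic, hci⟩ =>
    (hl.getElem_succ_le_of_lt hi ((mem_sort _).2 hc) hic).not_gt hci
  have hJ := hA.2.2 _ ((mem_sort _).1 (List.getElem_mem _))
    _ ((mem_sort _).1 (List.getElem_mem _)) hlt hadj
  refine ⟨Nat.sub_pos_of_lt hlt, Nat.le_floor ?_⟩
  rwa [Nat.cast_sub hlt.le]

def tupleCode {k : ℕ} (T : Fin k → Finset ℕ) : List ℕ :=
  [0].intercalate (List.ofFn fun i => (T i).sort.gaps)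

section tupleCode

variable {J : ℝ} {k : ℕ} {T : Fin k → Finset ℕ}

theorem length_tupleCode (hT : ∀ i, (T i).Nonempty) :
    (tupleCode T).length = ∑ i, (T i).card - 1 := by
  rcases eq_or_ne k 0 with rfl | hk0
  · simp [tupleCode]
  have hk : k ≤ ∑ i, (T i).card := by
    simpa using Finset.sum_le_sum fun i (_ : i ∈ univ) => show 1 ≤ _ from (hT i).card_pos
  rw [tupleCode, List.length_intercalate_singleton, List.map_ofFn, List.sum_ofFn,
    List.length_ofFn]
  simp only [Function.comp_def, List.length_gaps, length_sort]
  rw [Finset.sum_tsub_distrib _ fun i _ => show 1 ≤ _ from (hT i).card_pos]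
  simp only [sum_const, card_univ, Fintype.card_fin, smul_eq_mul, mul_one]
  omega

theorem forall_mem_tupleCode_le (hT : ∀ i, IsNormalizedJSeq J (T i)) :
    ∀ x ∈ tupleCode T, x ≤ ⌊J⌋₊ := by
  unfold tupleCode
  refine List.forall_mem_intercalate_singleton (p := (· ≤ ⌊J⌋₊)) (Nat.zero_le _) fun l hl => ?_
  obtain ⟨i, rfl⟩ := List.mem_ofFn.1 hl
  exact fun x hx => ((hT i).forall_mem_gaps_sort x hx).2

theorem splitOn_tupleCode (hk : k ≠ 0) (hT : ∀ i, IsNormalizedJSeq J (T i)) :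
    (tupleCode T).splitOn 0 = List.ofFn fun i => (T i).sort.gaps := by
  refine List.splitOn_intercalate 0 (fun l hl h0 => ?_) (by simpa [List.ofFn_eq_nil_iff])
  obtain ⟨i, rfl⟩ := List.mem_ofFn.1 hl
  exact ((hT i).forall_mem_gaps_sort 0 h0).1.false

theorem tupleCode_injOn :
    Set.InjOn (tupleCode (k := k)) {T | ∀ i, IsNormalizedJSeq J (T i)} := by
  intro T₁ hT₁ T₂ hT₂ h
  rcases eq_or_ne k 0 with rfl | hk
  · exact Subsingleton.elim _ _
  have hgaps : (fun i => (T₁ i).sort.gaps) = fun i => (T₂ i).sort.gaps := List.ofFn_inj.1 <| by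
    rw [← splitOn_tupleCode hk hT₁, ← splitOn_tupleCode hk hT₂, h]
  funext i
  exact eq_of_gaps_sort_eq (hT₁ i).2.1 (hT₂ i).2.1 (congrFun hgaps i)

end tupleCode

theorem count_tuples_of_normalized_J_sequences_general (J : ℝ) (hJ : 0 < J) (m x₃ : ℕ) :
    (Nat.card {T : Fin x₃ → Finset ℕ //
        (∀ i, IsNormalizedJSeq J (T i)) ∧ ∑ i, (T i).card = m} : ℝ) ≤
      (J + 1) ^ (m - 1) := by
  have hcard : Nat.card {T : Fin x₃ → Finset ℕ //
      (∀ i, IsNormalizedJSeq J (T i)) ∧ ∑ i, (T i).card = m} ≤ (⌊J⌋₊ + 1) ^ (m - 1) :=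
    Nat.card_le_pow_of_injective_list (f := fun T => tupleCode T.1)
      (fun T₁ T₂ h => Subtype.ext (tupleCode_injOn T₁.2.1 T₂.2.1 h))
      (fun T => by rw [length_tupleCode fun i => (T.2.1 i).1, T.2.2])
      (fun T => forall_mem_tupleCode_le T.2.1)
  calc _ ≤ (((⌊J⌋₊ + 1) ^ (m - 1) : ℕ) : ℝ) := by exact_mod_cast hcard
    _ ≤ (J + 1) ^ (m - 1) := by
      push_cast
      gcongr
      exact Nat.floor_le hJ.le

/-- for `J > 0` and `m ≥ 1`, the number of `x₃`-tuples of normalized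
`J`-sequences of total cardinality `m` is at most `(J+1)^{m−1}`. -/
theorem count_tuples_of_normalized_J_sequences (J : ℝ) (hJ : 0 < J) (m x₃ : ℕ)
    (hm : 1 ≤ m) :
    (Nat.card {T : Fin x₃ → Finset ℕ //
        (∀ i, IsNormalizedJSeq J (T i)) ∧ ∑ i, (T i).card = m} : ℝ) ≤
      (J + 1) ^ (m - 1) :=
  count_tuples_of_normalized_J_sequences_general J hJ m x₃
end

section
/- Let p be a prime, ℓ = ⌈log₂ p⌉, A_{2,p} = {0, ±1, ±2, ..., ±2^{ℓ−1}} ⊂ ℤ/pℤ, and μ the uniform measure on A_{2,p}, with Fourier coefficient μ̂(ξ) = (1/(2ℓ+1)) Σ_{x∈A_{2,p}} e(ξx/p). If J > 0 and ξ ∈ ℤ/pℤ satisfies ξ/p = 2^{−j₁} − 2^{−j₂} + O(2^{−ℓ−J}) (mod 1) for some 1 ≤ j₁ < j₂ ≤ ℓ, then μ̂(ξ) ≥ 1 − 4c₀/(2ℓ+1) − O(1/(2^J ℓ)), where c₀ = Σ_{j≥1}(1 − cos(2π/2^j)). -/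
open Finset

noncomputable def c0term (k : ℕ) : ℝ := 1 - Real.cos (2 * Real.pi / 2 ^ (k + 1))

lemma c0term_nonneg (k : ℕ) : 0 ≤ c0term k := by
  simp only [c0term, sub_nonneg]; exact Real.cos_le_one _

lemma one_sub_cos_le (x : ℝ) : 1 - Real.cos x ≤ x ^ 2 / 2 := by
  have h1 : Real.sin (x / 2) ^ 2 = 1 / 2 - Real.cos (2 * (x / 2)) / 2 :=
    Real.sin_sq_eq_half_sub (x / 2)
  have h2 : Real.sin (x / 2) ^ 2 ≤ (x / 2) ^ 2 := Real.sin_sq_le_sq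
  have h3 : 2 * (x / 2) = x := by ring
  rw [h3] at h1
  nlinarith

set_option maxHeartbeats 800000 in
lemma summable_c0term : Summable c0term := by
  apply Summable.of_nonneg_of_le c0term_nonneg
    (f := fun k => Real.pi ^ 2 / 2 * (1 / 4 : ℝ) ^ k)
  · intro k
    have h := one_sub_cos_le (2 * Real.pi / 2 ^ (k + 1))
    have h4 : ((2:ℝ) ^ (k+1)) ^ 2 = 4 * 4 ^ k := by
      rw [← pow_mul]
      have : (k+1) * 2 = 2 * k + 2 := by ring
      rw [this, pow_add, pow_mul]; norm_num; ring
    have heq : (2 * Real.pi / 2 ^ (k + 1)) ^ 2 / 2 = Real.pi ^ 2 / 2 * (1/4:ℝ) ^ k := by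
      rw [div_pow, h4, one_div, inv_pow]
      have h4k : (0:ℝ) < 4 ^ k := by positivity
      field_simp
      ring
    calc c0term k ≤ _ := h
      _ = _ := heq
  · exact (summable_geometric_of_lt_one (by norm_num) (by norm_num)).mul_left _

lemma cos_lip (x y : ℝ) : 1 - Real.cos x ≤ (1 - Real.cos y) + |x - y| := by
  have key : Real.cos y - Real.cos x = -2 * Real.sin ((y + x)/2) * Real.sin ((y - x)/2) :=
    Real.cos_sub_cos y x
  have h1 : |Real.sin ((y + x)/2)| ≤ 1 := Real.abs_sin_le_one _
  have h2 : |Real.sin ((y - x)/2)| ≤ |(y - x)/2| := Real.abs_sin_le_abs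
  have h3 : Real.cos y - Real.cos x ≤ |x - y| := by
    calc Real.cos y - Real.cos x ≤ |Real.cos y - Real.cos x| := le_abs_self _
      _ = 2 * |Real.sin ((y + x)/2)| * |Real.sin ((y - x)/2)| := by
          rw [key]; rw [abs_mul, abs_mul]; norm_num
      _ ≤ 2 * 1 * |(y - x)/2| := by
          apply mul_le_mul _ h2 (abs_nonneg _) (by norm_num)
          apply mul_le_mul_of_nonneg_left h1 (by norm_num)
      _ = |y - x| := by rw [abs_div]; rw [abs_of_pos (by norm_num : (0:ℝ) < 2)]; ring
      _ = |x - y| := abs_sub_comm _ _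
  linarith

lemma per_term (V δ : ℝ) (m : ℤ) (j₁ j₂ i : ℕ) (h12 : j₁ < j₂)
    (hV : V = ((2:ℝ)^(-(j₁:ℤ)) - (2:ℝ)^(-(j₂:ℤ))) + m + δ) :
    1 - Real.cos (2*Real.pi*2^i*V) ≤
      (if i < j₁ then c0term (j₁ - 1 - i) else if i < j₂ then c0term (j₂ - 1 - i) else 0)
        + 2*Real.pi*2^i*|δ| := by
  have h2 : (2:ℝ) ≠ 0 := two_ne_zero
  set X : ℝ := 2*Real.pi*((2:ℝ)^((i:ℤ)-(j₁:ℤ)) - (2:ℝ)^((i:ℤ)-(j₂:ℤ))) with hX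
  have e1 : (2:ℝ)^i * (2:ℝ)^(-(j₁:ℤ)) = (2:ℝ)^((i:ℤ)-(j₁:ℤ)) := by
    rw [← zpow_natCast (2:ℝ) i, ← zpow_add₀ h2, sub_eq_add_neg]
  have e2 : (2:ℝ)^i * (2:ℝ)^(-(j₂:ℤ)) = (2:ℝ)^((i:ℤ)-(j₂:ℤ)) := by
    rw [← zpow_natCast (2:ℝ) i, ← zpow_add₀ h2, sub_eq_add_neg]
  have key : 2*Real.pi*2^i*V = (X + 2*Real.pi*(2^i*δ)) + ((2^i*m : ℤ) : ℝ)*(2*Real.pi) := by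
    rw [hV, hX, ← e1, ← e2]; push_cast; ring
  have hcos : Real.cos (2*Real.pi*2^i*V) = Real.cos (X + 2*Real.pi*(2^i*δ)) := by
    rw [key, Real.cos_add_int_mul_two_pi]
  have habs : |X + 2*Real.pi*(2^i*δ) - X| = 2*Real.pi*2^i*|δ| := by
    simp only [add_sub_cancel_left, abs_mul, abs_two, abs_of_nonneg Real.pi_pos.le,
      abs_of_nonneg (by positivity : (0:ℝ) ≤ (2:ℝ)^i)]
    ring
  have hlip : 1 - Real.cos (2*Real.pi*2^i*V) ≤ (1 - Real.cos X) + 2*Real.pi*2^i*|δ| := by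
    rw [hcos, ← habs]; exact cos_lip _ _
  have main : 1 - Real.cos X ≤
      (if i < j₁ then c0term (j₁ - 1 - i) else if i < j₂ then c0term (j₂ - 1 - i) else 0) := by
    by_cases hij1 : i < j₁
    · simp only [if_pos hij1]
      set a : ℝ := (2:ℝ)^((i:ℤ)-(j₁:ℤ)) with haa
      set b : ℝ := (2:ℝ)^((i:ℤ)-(j₂:ℤ)) with hbb
      have hb0 : 0 < b := zpow_pos (by norm_num) _
      have hba : b ≤ a := zpow_le_zpow_right₀ (by norm_num) (by omega)
      have ha12 : a ≤ 1/2 := by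
        have : a ≤ (2:ℝ)^(-1:ℤ) := zpow_le_zpow_right₀ (by norm_num) (by omega)
        simpa using this
      have hpi := Real.pi_pos
      have hcosle : Real.cos (2*Real.pi*a) ≤ Real.cos X := by
        apply Real.cos_le_cos_of_nonneg_of_le_pi
        · rw [hX]; nlinarith
        · nlinarith
        · rw [hX]; nlinarith
      have hidx : j₁ - 1 - i + 1 = j₁ - i := by omega
      have ha' : a = 1 / 2^(j₁-i) := by
        rw [haa]
        have : (i:ℤ)-(j₁:ℤ) = -((j₁ - i : ℕ):ℤ) := by omega
        rw [this, zpow_neg, zpow_natCast, one_div]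
      have hterm : c0term (j₁ - 1 - i) = 1 - Real.cos (2*Real.pi*a) := by
        rw [c0term, hidx, ha', mul_one_div]
      rw [hterm]; linarith
    · push_neg at hij1
      have hN1 : (2:ℝ)^((i:ℤ)-(j₁:ℤ)) = ((2^(i-j₁):ℤ):ℝ) := by
        have h : (i:ℤ)-(j₁:ℤ) = ((i - j₁ : ℕ):ℤ) := by omega
        rw [h, zpow_natCast]; push_cast; ring
      by_cases hij2 : i < j₂
      · simp only [if_neg (by omega : ¬ i < j₁), if_pos hij2]
        have hXeq : X = (-(2*Real.pi*(2:ℝ)^((i:ℤ)-(j₂:ℤ)))) + ((2^(i-j₁):ℤ):ℝ)*(2*Real.pi) := by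
          rw [hX, hN1]; ring
        have hcX : Real.cos X = Real.cos (2*Real.pi*(2:ℝ)^((i:ℤ)-(j₂:ℤ))) := by
          rw [hXeq, Real.cos_add_int_mul_two_pi, Real.cos_neg]
        have hidx : j₂ - 1 - i + 1 = j₂ - i := by omega
        have hb' : (2:ℝ)^((i:ℤ)-(j₂:ℤ)) = 1 / 2^(j₂-i) := by
          have : (i:ℤ)-(j₂:ℤ) = -((j₂ - i : ℕ):ℤ) := by omega
          rw [this, zpow_neg, zpow_natCast, one_div]
        have hterm : c0term (j₂ - 1 - i) = 1 - Real.cos (2*Real.pi*(2:ℝ)^((i:ℤ)-(j₂:ℤ))) := by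
          rw [c0term, hidx, hb', mul_one_div]
        rw [hterm, hcX]
      · simp only [if_neg (by omega : ¬ i < j₁), if_neg hij2]
        push_neg at hij2
        have hN2 : (2:ℝ)^((i:ℤ)-(j₂:ℤ)) = ((2^(i-j₂):ℤ):ℝ) := by
          have h : (i:ℤ)-(j₂:ℤ) = ((i - j₂ : ℕ):ℤ) := by omega
          rw [h, zpow_natCast]; push_cast; ring
        have hXeq : X = 0 + ((2^(i-j₁) - 2^(i-j₂) : ℤ):ℝ)*(2*Real.pi) := by
          rw [hX, hN1, hN2]; push_cast; ring
        have : Real.cos X = 1 := by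
          rw [hXeq]
          have := Real.cos_add_int_mul_two_pi 0 ((2^(i-j₁) - 2^(i-j₂) : ℤ))
          push_cast at this ⊢
          rw [this, Real.cos_zero]
        rw [this]; norm_num
  linarith

lemma sum_g_le (j₁ j₂ ℓ : ℕ) (h12 : j₁ < j₂) (h2ℓ : j₂ ≤ ℓ) :
    ∑ i ∈ range ℓ,
        (if i < j₁ then c0term (j₁ - 1 - i) else if i < j₂ then c0term (j₂ - 1 - i) else 0)
      ≤ 2 * ∑' k, c0term k := by
  have hs := summable_c0term
  have htail : ∀ i ∈ Ico j₂ ℓ,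
      (if i < j₁ then c0term (j₁ - 1 - i) else if i < j₂ then c0term (j₂ - 1 - i) else 0) = 0 := by
    intro i hi
    simp only [mem_Ico] at hi
    rw [if_neg (by omega), if_neg (by omega)]
  have hsplit1 :
      ∑ i ∈ range ℓ,
          (if i < j₁ then c0term (j₁ - 1 - i) else if i < j₂ then c0term (j₂ - 1 - i) else 0)
        = ∑ i ∈ range j₂,
          (if i < j₁ then c0term (j₁ - 1 - i) else if i < j₂ then c0term (j₂ - 1 - i) else 0) := by
    rw [← Finset.sum_range_add_sum_Ico _ h2ℓ, Finset.sum_eq_zero htail, add_zero]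
  have hsplit2 :
      ∑ i ∈ range j₂,
          (if i < j₁ then c0term (j₁ - 1 - i) else if i < j₂ then c0term (j₂ - 1 - i) else 0)
        = (∑ i ∈ range j₁, c0term (j₁ - 1 - i)) + ∑ i ∈ Ico j₁ j₂, c0term (j₂ - 1 - i) := by
    rw [← Finset.sum_range_add_sum_Ico _ h12.le]
    congr 1
    · apply Finset.sum_congr rfl
      intro i hi
      simp only [mem_range] at hi
      rw [if_pos hi]
    · apply Finset.sum_congr rfl
      intro i hi
      simp only [mem_Ico] at hi
      rw [if_neg (by omega), if_pos hi.2]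
  have h1 : ∑ i ∈ range j₁, c0term (j₁ - 1 - i) ≤ ∑' k, c0term k := by
    rw [Finset.sum_range_reflect]
    exact Summable.sum_le_tsum _ (fun i _ => c0term_nonneg i) hs
  have h2 : ∑ i ∈ Ico j₁ j₂, c0term (j₂ - 1 - i) ≤ ∑' k, c0term k := by
    rw [Finset.sum_Ico_eq_sum_range]
    have : ∀ i ∈ range (j₂ - j₁), c0term (j₂ - 1 - (j₁ + i)) = c0term ((j₂ - j₁) - 1 - i) := by
      intro i _
      congr 1
      omega
    rw [Finset.sum_congr rfl this, Finset.sum_range_reflect]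
    exact Summable.sum_le_tsum _ (fun i _ => c0term_nonneg i) hs
  rw [hsplit1, hsplit2]
  linarith


/-- for the power-of-2 walk with `ℓ = ⌈log₂ p⌉`, if
`ξ/p = 2^{−j₁} − 2^{−j₂} + O(2^{−ℓ−J}) (mod 1)` with `1 ≤ j₁ < j₂ ≤ ℓ`, then the Fourier
coefficient `μ̂(ξ) = (1/(2ℓ+1))(1 + 2 Σ_{i<ℓ} cos(2π·2^i ξ/p))` satisfies
`μ̂(ξ) ≥ 1 − 4c₀/(2ℓ+1) − O(1/(2^J ℓ))`, where `c₀ = Σ_{j≥1}(1 − cos(2π/2^j))`. -/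
theorem power_of_two_fourier_lower_bound :
    ∀ C₁ : ℝ, 0 < C₁ → ∃ C₂ : ℝ, 0 < C₂ ∧
      ∀ p : ℕ, p.Prime → ∀ J : ℝ, 0 < J → ∀ ξ : ZMod p, ∀ j₁ j₂ : ℕ,
        1 ≤ j₁ → j₁ < j₂ → j₂ ≤ Nat.clog 2 p →
        (∃ m : ℤ, |(ξ.val : ℝ) / p - ((2 : ℝ) ^ (-(j₁ : ℤ)) - (2 : ℝ) ^ (-(j₂ : ℤ))) - m| ≤
            C₁ * (2 : ℝ) ^ (-(Nat.clog 2 p : ℝ) - J)) →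
        1 - 4 * (∑' j : ℕ, (1 - Real.cos (2 * Real.pi / 2 ^ (j + 1)))) /
              (2 * (Nat.clog 2 p : ℝ) + 1) -
            C₂ / ((2 : ℝ) ^ J * (Nat.clog 2 p : ℝ)) ≤
          (1 + 2 * ∑ i ∈ Finset.range (Nat.clog 2 p),
              Real.cos (2 * Real.pi * 2 ^ i * (ξ.val : ℝ) / p)) /
            (2 * (Nat.clog 2 p : ℝ) + 1) := by
  intro C₁ hC₁
  have hpi := Real.pi_pos
  refine ⟨2 * Real.pi * C₁ + 1, by positivity, ?_⟩
  intro p hp J hJ ξ j₁ j₂ hj1 hj12 hj2 hm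
  obtain ⟨m, hm⟩ := hm
  set ℓ := Nat.clog 2 p with hℓdef
  have hℓ2 : 2 ≤ ℓ := le_trans (by omega) hj2
  set V : ℝ := (ξ.val : ℝ) / p with hVdef
  set δ : ℝ := V - ((2:ℝ)^(-(j₁:ℤ)) - (2:ℝ)^(-(j₂:ℤ))) - m with hδdef
  have hV : V = ((2:ℝ)^(-(j₁:ℤ)) - (2:ℝ)^(-(j₂:ℤ))) + m + δ := by rw [hδdef]; ring
  have hδb : |δ| ≤ C₁ * (2:ℝ) ^ (-(ℓ:ℝ) - J) := hm
  -- key sum bound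
  set c₀ : ℝ := ∑' k, c0term k with hc₀def
  have hc₀nn : 0 ≤ c₀ := tsum_nonneg c0term_nonneg
  set T : ℝ := ∑ i ∈ range ℓ, (1 - Real.cos (2*Real.pi*2^i*V)) with hTdef
  have hT : T ≤ 2 * c₀ + 2 * Real.pi * C₁ * ((2:ℝ)^J)⁻¹ := by
    have step1 : T ≤ ∑ i ∈ range ℓ,
        ((if i < j₁ then c0term (j₁ - 1 - i) else if i < j₂ then c0term (j₂ - 1 - i) else 0)
          + 2*Real.pi*2^i*|δ|) := by
      apply Finset.sum_le_sum
      intro i _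
      exact per_term V δ m j₁ j₂ i hj12 hV
    rw [Finset.sum_add_distrib] at step1
    have step2 := sum_g_le j₁ j₂ ℓ hj12 hj2
    have step3 : ∑ i ∈ range ℓ, 2*Real.pi*2^i*|δ| ≤ 2 * Real.pi * C₁ * ((2:ℝ)^J)⁻¹ := by
      have hgeom : ∑ i ∈ range ℓ, (2:ℝ)^i = 2^ℓ - 1 := by
        rw [geom_sum_eq (by norm_num : (2:ℝ) ≠ 1)]
        norm_num
      have he : ∑ i ∈ range ℓ, 2*Real.pi*(2:ℝ)^i*|δ| = 2*Real.pi*|δ| * ((2:ℝ)^ℓ - 1) := by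
        rw [← hgeom, Finset.mul_sum]
        apply Finset.sum_congr rfl
        intro i _; ring
      rw [he]
      have hpow : (2:ℝ)^ℓ * ((2:ℝ) ^ (-(ℓ:ℝ) - J)) = ((2:ℝ)^J)⁻¹ := by
        rw [← Real.rpow_natCast 2 ℓ, ← Real.rpow_add (by norm_num : (0:ℝ) < 2)]
        rw [← Real.rpow_neg (by norm_num : (0:ℝ) ≤ 2)]
        congr 1
        ring
      have h2ℓpos : (0:ℝ) < 2^ℓ := by positivity
      have habs : (0:ℝ) ≤ |δ| := abs_nonneg _
      calc 2*Real.pi*|δ| * ((2:ℝ)^ℓ - 1) ≤ 2*Real.pi*|δ| * (2:ℝ)^ℓ := by nlinarith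
        _ ≤ 2*Real.pi*(C₁ * (2:ℝ) ^ (-(ℓ:ℝ) - J)) * (2:ℝ)^ℓ := by
            gcongr
        _ = 2*Real.pi*C₁ * ((2:ℝ)^ℓ * ((2:ℝ) ^ (-(ℓ:ℝ) - J))) := by ring
        _ = 2 * Real.pi * C₁ * ((2:ℝ)^J)⁻¹ := by rw [hpow]
    linarith
  -- rewrite the cosine sum
  have hsum : ∑ i ∈ Finset.range ℓ, Real.cos (2 * Real.pi * 2 ^ i * (ξ.val : ℝ) / p)
      = (ℓ:ℝ) - T := by
    have : ∀ i ∈ range ℓ, Real.cos (2 * Real.pi * 2 ^ i * (ξ.val : ℝ) / p)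
        = Real.cos (2*Real.pi*2^i*V) := by
      intro i _
      rw [hVdef, mul_div_assoc]
    rw [Finset.sum_congr rfl this, hTdef, Finset.sum_sub_distrib]
    simp
  rw [hsum]
  -- final algebra
  have hc0eq : (∑' j : ℕ, (1 - Real.cos (2 * Real.pi / 2 ^ (j + 1)))) = c₀ := rfl
  rw [hc0eq]
  set P : ℝ := (2:ℝ)^J with hPdef
  have hP1 : (1:ℝ) ≤ P := by
    rw [hPdef]
    calc (1:ℝ) = (2:ℝ)^(0:ℝ) := by rw [Real.rpow_zero]
      _ ≤ (2:ℝ)^J := Real.rpow_le_rpow_of_exponent_le (by norm_num) hJ.le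
  have hP0 : (0:ℝ) < P := lt_of_lt_of_le one_pos hP1
  have hℓR : (2:ℝ) ≤ (ℓ:ℝ) := by exact_mod_cast hℓ2
  have hD0 : (0:ℝ) < 2*(ℓ:ℝ)+1 := by linarith
  have hPl0 : (0:ℝ) < P * (ℓ:ℝ) := by positivity
  rw [le_div_iff₀ hD0]
  set C₂ : ℝ := 2 * Real.pi * C₁ + 1 with hC₂def
  have expand : (1 - 4 * c₀ / (2*(ℓ:ℝ)+1) - C₂ / (P * (ℓ:ℝ))) * (2*(ℓ:ℝ)+1)
      = (2*(ℓ:ℝ)+1) - 4*c₀ - C₂*(2*(ℓ:ℝ)+1)/(P*(ℓ:ℝ)) := by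
    field_simp
  rw [expand]
  have hkey : 4*Real.pi*C₁*P⁻¹ ≤ C₂*(2*(ℓ:ℝ)+1)/(P*(ℓ:ℝ)) := by
    rw [le_div_iff₀ hPl0]
    have hPP : P⁻¹ * P = 1 := inv_mul_cancel₀ (ne_of_gt hP0)
    calc 4*Real.pi*C₁*P⁻¹ * (P*(ℓ:ℝ)) = 4*Real.pi*C₁*(ℓ:ℝ) * (P⁻¹*P) := by ring
      _ = 4*Real.pi*C₁*(ℓ:ℝ) := by rw [hPP, mul_one]
      _ ≤ C₂*(2*(ℓ:ℝ)+1) := by rw [hC₂def]; nlinarith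
  linarith
end
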